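/- Let A be an online paging policy satisfying the eviction hypothesis with parameter c ≥ 1. Then A is 2c-competitive: for every online paging policy B started from the same initial cache and every horizon T, E[cost(A, T)] ≤ 2c · E[cost(B, T)]. -/
import Mathlib


open Finset

/-! ## The Markov paging model

Pages are `Fin n`.  Requests are drawn from a time-homogeneous Markov chain with
row-stochastic transition matrix `M` and a fixed initial distribution `init`.
An online paging policy is given by its (randomized) eviction rule: on a cache miss,
`pol hist cache p` is the probability of evicting page `p`, where `hist` is the list
of requests seen so far (most recent first, the current — missed — request at the head)
and `cache` is the current cache. -/

/-- A (randomized) online paging policy: given the request history (most recent first,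
the current request at the head) and the current cache, the probability of evicting
each page. -/
abbrev Policy (n : ℕ) := List (Fin n) → Finset (Fin n) → Fin n → ℝ

/-- `M` is a row-stochastic transition matrix. -/
def IsStochastic {n : ℕ} (M : Fin n → Fin n → ℝ) : Prop :=
  ∀ i, (∀ j, 0 ≤ M i j) ∧ (∑ j, M i j) = 1

/-- `μ` is a probability distribution on the pages. -/
def IsDist {n : ℕ} (μ : Fin n → ℝ) : Prop :=
  (∀ i, 0 ≤ μ i) ∧ (∑ i, μ i) = 1

/-- Validity of a policy for cache size `k`: on any (size-`k`) cache, the eviction rule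
is a probability distribution supported on the cache. -/
def IsPolicy {n : ℕ} (k : ℕ) (pol : Policy n) : Prop :=
  ∀ (hist : List (Fin n)) (cache : Finset (Fin n)), cache.card = k →
    (∀ p, 0 ≤ pol hist cache p) ∧ (∀ p, p ∉ cache → pol hist cache p = 0) ∧
      (∑ p ∈ cache, pol hist cache p) = 1

/-- Expected number of misses of policy `pol` on the next `T` requests, where the next
request is drawn from `dist`, the history so far is `hist` and the current cache is
`cache`.  On a hit the cache is unchanged; on a miss the policy pays `1`, evicts a page
`p` with probability `pol (x :: hist) cache p` and brings the requested page in. -/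
noncomputable def runAux {n : ℕ} (M : Fin n → Fin n → ℝ) (pol : Policy n) :
    ℕ → (Fin n → ℝ) → List (Fin n) → Finset (Fin n) → ℝ
  | 0, _, _, _ => 0
  | T + 1, dist, hist, cache =>
      ∑ x : Fin n, dist x *
        (if x ∈ cache then runAux M pol T (M x) (x :: hist) cache
         else 1 + ∑ p ∈ cache, pol (x :: hist) cache p *
              runAux M pol T (M x) (x :: hist) (insert x (cache.erase p)))

/-- `E[cost(pol, T)]`: the expected number of cache misses of policy `pol` during the
first `T` requests of the Markov chain `(M, init)`, starting from cache `cache`. -/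
noncomputable def expCost {n : ℕ} (M : Fin n → Fin n → ℝ) (init : Fin n → ℝ)
    (pol : Policy n) (cache : Finset (Fin n)) (T : ℕ) : ℝ :=
  runAux M pol T init [] cache

/-- Probability that, within the next `T` steps of the chain currently at `s`, page `p`
is requested strictly before page `q` (a request to `q` — in particular `p = q` — stops
the process with failure). -/
noncomputable def alphaAux {n : ℕ} (M : Fin n → Fin n → ℝ) (p q : Fin n) :
    ℕ → Fin n → ℝ
  | 0, _ => 0
  | T + 1, s =>
      ∑ x : Fin n, M s x *
        (if x = q then 0 else if x = p then 1 else alphaAux M p q T x)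

/-- `α(p<q|s)`: the probability that, for the chain started at `s`, the first subsequent
request to `p` occurs strictly before the first subsequent request to `q`; in particular
`α(p<p|s) = 0`. -/
noncomputable def alphaProb {n : ℕ} (M : Fin n → Fin n → ℝ) (p q s : Fin n) : ℝ :=
  ⨆ T : ℕ, alphaAux M p q T s

/-- The eviction hypothesis with parameter `c`: `pol` is a valid policy and, whenever it
suffers a cache miss (most recent request `s`, current cache `cache`), the page it
evicts is drawn from a distribution such that for every page `q` of the cache, the
probability — over the evicted page `p` and the future requests of the chain
conditioned on `s` — that the first subsequent request to `q` occurs no later than the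
first subsequent request to `p` (that probability being `∑_p pol p · (1 − α(p<q|s))`)
is at least `1/c`. -/
def EvictionHyp {n : ℕ} (k : ℕ) (M : Fin n → Fin n → ℝ) (pol : Policy n) (c : ℝ) :
    Prop :=
  IsPolicy k pol ∧
    ∀ (s : Fin n) (hist : List (Fin n)) (cache : Finset (Fin n)),
      cache.card = k → s ∉ cache →
        ∀ q ∈ cache,
          1 / c ≤ ∑ p ∈ cache, pol (s :: hist) cache p * (1 - alphaProb M p q s)

section AlphaLemmas

variable {n : ℕ} {M : Fin n → Fin n → ℝ}

lemma alphaAux_succ (p q s : Fin n) (T : ℕ) :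
    alphaAux M p q (T + 1) s =
      ∑ x : Fin n, M s x *
        (if x = q then 0 else if x = p then 1 else alphaAux M p q T x) := rfl

lemma alphaAux_nonneg (hM : IsStochastic M) (p q : Fin n) :
    ∀ T s, 0 ≤ alphaAux M p q T s := by
  intro T
  induction T with
  | zero => intro s; simp [alphaAux]
  | succ T ih =>
    intro s
    rw [alphaAux_succ]
    refine Finset.sum_nonneg fun x _ => mul_nonneg ((hM s).1 x) ?_
    split_ifs
    · exact le_refl _
    · exact zero_le_one
    · exact ih x

lemma alphaAux_le_one (hM : IsStochastic M) (p q : Fin n) :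
    ∀ T s, alphaAux M p q T s ≤ 1 := by
  intro T
  induction T with
  | zero => intro s; simp [alphaAux]
  | succ T ih =>
    intro s
    rw [alphaAux_succ]
    calc ∑ x : Fin n, M s x *
        (if x = q then 0 else if x = p then 1 else alphaAux M p q T x)
        ≤ ∑ x : Fin n, M s x * 1 := by
          refine Finset.sum_le_sum fun x _ => mul_le_mul_of_nonneg_left ?_ ((hM s).1 x)
          split_ifs
          · exact zero_le_one
          · exact le_refl _
          · exact ih x
      _ = 1 := by simp [(hM s).2]

lemma alphaAux_mono (hM : IsStochastic M) (p q : Fin n) (s : Fin n) :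
    Monotone fun T => alphaAux M p q T s := by
  have key : ∀ T s, alphaAux M p q T s ≤ alphaAux M p q (T + 1) s := by
    intro T
    induction T with
    | zero => intro s; simpa [alphaAux] using alphaAux_nonneg hM p q 1 s
    | succ T ih =>
      intro s
      rw [alphaAux_succ, alphaAux_succ]
      refine Finset.sum_le_sum fun x _ => mul_le_mul_of_nonneg_left ?_ ((hM s).1 x)
      split_ifs
      · exact le_refl _
      · exact le_refl _
      · exact ih x
  exact monotone_nat_of_le_succ fun T => key T s

lemma alphaProb_bddAbove (hM : IsStochastic M) (p q s : Fin n) :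
    BddAbove (Set.range fun T => alphaAux M p q T s) := by
  refine ⟨1, ?_⟩
  rintro _ ⟨T, rfl⟩
  exact alphaAux_le_one hM p q T s

lemma alphaProb_nonneg (hM : IsStochastic M) (p q s : Fin n) :
    0 ≤ alphaProb M p q s := by
  have := le_ciSup (alphaProb_bddAbove hM p q s) 0
  simpa [alphaProb, alphaAux] using this

lemma alphaProb_le_one (hM : IsStochastic M) (p q s : Fin n) :
    alphaProb M p q s ≤ 1 :=
  ciSup_le fun T => alphaAux_le_one hM p q T s

lemma alphaProb_eq (hM : IsStochastic M) (p q s : Fin n) :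
    alphaProb M p q s =
      ∑ x : Fin n, M s x *
        (if x = q then 0 else if x = p then 1 else alphaProb M p q x) := by
  have hT : ∀ r, Filter.Tendsto (fun T => alphaAux M p q T r) Filter.atTop
      (nhds (alphaProb M p q r)) :=
    fun r => tendsto_atTop_ciSup (alphaAux_mono hM p q r) (alphaProb_bddAbove hM p q r)
  have h1 : Filter.Tendsto (fun T => alphaAux M p q (T + 1) s) Filter.atTop
      (nhds (alphaProb M p q s)) :=
    (hT s).comp (Filter.tendsto_add_atTop_nat 1)
  have h2 : Filter.Tendsto (fun T => alphaAux M p q (T + 1) s) Filter.atTop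
      (nhds (∑ x : Fin n, M s x *
        (if x = q then 0 else if x = p then 1 else alphaProb M p q x))) := by
    simp only [alphaAux_succ]
    refine tendsto_finset_sum _ fun x _ => ?_
    rcases eq_or_ne x q with h | h
    · simp only [h, if_pos rfl]
      exact tendsto_const_nhds
    · rcases eq_or_ne x p with h' | h'
      · simp only [if_neg h, h', if_pos rfl]
        exact tendsto_const_nhds
      · simp only [if_neg h, if_neg h']
        exact (hT x).const_mul _
  exact tendsto_nhds_unique h1 h2

end AlphaLemmas
section StepLemmas

variable {n : ℕ}

/-- One-step "first passage" kernel used in the potential function. -/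
noncomputable def stepP {n : ℕ} (M : Fin n → Fin n → ℝ) (p q x : Fin n) : ℝ :=
  if x = q then 0 else if x = p then 1 else alphaProb M p q x

variable {M : Fin n → Fin n → ℝ}

lemma stepP_nonneg (hM : IsStochastic M) (p q x : Fin n) : 0 ≤ stepP M p q x := by
  unfold stepP
  split_ifs
  · exact le_refl _
  · exact zero_le_one
  · exact alphaProb_nonneg hM p q x

lemma stepP_le_one (hM : IsStochastic M) (p q x : Fin n) : stepP M p q x ≤ 1 := by
  unfold stepP
  split_ifs
  · exact zero_le_one
  · exact le_refl _
  · exact alphaProb_le_one hM p q x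

lemma alphaProb_eq_step (hM : IsStochastic M) (p q s : Fin n) :
    alphaProb M p q s = ∑ x : Fin n, M s x * stepP M p q x :=
  alphaProb_eq hM p q s

lemma perm_image_eq {σ : Equiv.Perm (Fin n)} {S T : Finset (Fin n)}
    (h : ∀ p, p ∈ S ↔ σ p ∈ T) : S.image σ = T := by
  ext y
  constructor
  · intro hy
    obtain ⟨z, hz, rfl⟩ := Finset.mem_image.1 hy
    exact (h z).1 hz
  · intro hy
    refine Finset.mem_image.2 ⟨σ.symm y, (h _).2 ?_, σ.apply_symm_apply y⟩
    rwa [σ.apply_symm_apply]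

lemma perm_image_iff {σ : Equiv.Perm (Fin n)} {S T : Finset (Fin n)}
    (h : S.image σ = T) (p : Fin n) : p ∈ S ↔ σ p ∈ T := by
  constructor
  · intro hp; exact h ▸ Finset.mem_image_of_mem σ hp
  · intro hp
    rw [← h] at hp
    obtain ⟨z, hz, he⟩ := Finset.mem_image.1 hp
    rwa [σ.injective he] at hz

lemma card_insert_erase {s : Finset (Fin n)} {x p : Fin n} (hp : p ∈ s) (hx : x ∉ s) :
    (insert x (s.erase p)).card = s.card := by
  rw [Finset.card_insert_of_notMem (fun hmem => hx (Finset.mem_of_mem_erase hmem)),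
    Finset.card_erase_of_mem hp]
  exact Nat.succ_pred_eq_of_pos (Finset.card_pos.2 ⟨p, hp⟩)

end StepLemmas
section KeyLemma

variable {n : ℕ} {M : Fin n → Fin n → ℝ}

lemma runAux_succ (pol : Policy n) (T : ℕ) (dist : Fin n → ℝ) (hist : List (Fin n))
    (cache : Finset (Fin n)) :
    runAux M pol (T + 1) dist hist cache =
      ∑ x : Fin n, dist x *
        (if x ∈ cache then runAux M pol T (M x) (x :: hist) cache
         else 1 + ∑ p ∈ cache, pol (x :: hist) cache p *
              runAux M pol T (M x) (x :: hist) (insert x (cache.erase p))) := rfl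

lemma stepP_eq_alpha {x p q : Fin n} (h1 : x ≠ q) (h2 : x ≠ p) :
    stepP M p q x = alphaProb M p q x := by
  unfold stepP; rw [if_neg h1, if_neg h2]

set_option maxHeartbeats 4000000 in
lemma key_lemma (k : ℕ) (hM : IsStochastic M)
    (c : ℝ) (hc : 1 ≤ c) (A B : Policy n)
    (hA : EvictionHyp k M A c) (hB : IsPolicy k B) :
    ∀ (T : ℕ) (dist : Fin n → ℝ) (hist : List (Fin n)) (CA CB : Finset (Fin n))
      (σ : Equiv.Perm (Fin n)),
      IsDist dist → CA.card = k → CB.card = k →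
      (CB \ CA).image σ = (CA \ CB) →
      runAux M A T dist hist CA ≤ 2 * c * runAux M B T dist hist CB +
        ∑ p ∈ CB \ CA, c * (1 + ∑ x : Fin n, dist x * stepP M p (σ p) x) := by
  have hc0 : (0:ℝ) < c := lt_of_lt_of_le one_pos hc
  intro T
  induction T with
  | zero =>
    intro dist hist CA CB σ hdist hCA hCB hσ
    show (0:ℝ) ≤ 2 * c * 0 + _
    rw [mul_zero, zero_add]
    refine Finset.sum_nonneg fun p hp => ?_
    have h1 : 0 ≤ ∑ x : Fin n, dist x * stepP M p (σ p) x :=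
      Finset.sum_nonneg fun x _ => mul_nonneg (hdist.1 x) (stepP_nonneg hM _ _ _)
    nlinarith
  | succ T ih =>
    intro dist hist CA CB σ hdist hCA hCB hσ
    classical
    set D := CB \ CA with hD
    have hmemD : ∀ p, p ∈ D ↔ σ p ∈ CA \ CB := fun p => perm_image_iff hσ p
    set fA : Fin n → ℝ := fun x =>
      if x ∈ CA then runAux M A T (M x) (x :: hist) CA
      else 1 + ∑ p ∈ CA, A (x :: hist) CA p *
        runAux M A T (M x) (x :: hist) (insert x (CA.erase p)) with hfA
    set fB : Fin n → ℝ := fun x =>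
      if x ∈ CB then runAux M B T (M x) (x :: hist) CB
      else 1 + ∑ p ∈ CB, B (x :: hist) CB p *
        runAux M B T (M x) (x :: hist) (insert x (CB.erase p)) with hfB
    have hrA : runAux M A (T + 1) dist hist CA = ∑ x : Fin n, dist x * fA x := rfl
    have hrB : runAux M B (T + 1) dist hist CB = ∑ x : Fin n, dist x * fB x := rfl
    have hFbound : ∀ x : Fin n, fA x ≤ 2 * c * fB x + c * D.card +
        ∑ p ∈ D, c * stepP M p (σ p) x := by
      intro x
      have hdx : IsDist (M x) := ⟨(hM x).1, (hM x).2⟩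
      set g : Fin n → Fin n → ℝ := fun p q => c * (1 + alphaProb M p q x) with hg
      have hgc : ∀ p q, c ≤ g p q := fun p q => by
        have := alphaProb_nonneg hM p q x; simp only [hg]; nlinarith
      have hg2 : ∀ p q, g p q ≤ 2 * c := fun p q => by
        have := alphaProb_le_one hM p q x; simp only [hg]; nlinarith
      have hg0 : ∀ p q, 0 ≤ g p q := fun p q => le_trans (le_of_lt hc0) (hgc p q)
      have hIH : ∀ (CA' CB' : Finset (Fin n)) (σ' : Equiv.Perm (Fin n)),
          CA'.card = k → CB'.card = k → ((CB' \ CA').image σ' = CA' \ CB') →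
          runAux M A T (M x) (x :: hist) CA' ≤
            2 * c * runAux M B T (M x) (x :: hist) CB' +
            ∑ p ∈ CB' \ CA', g p (σ' p) := by
        intro CA' CB' σ' h1 h2 h3
        refine le_trans (ih (M x) (x :: hist) CA' CB' σ' hdx h1 h2 h3) (le_of_eq ?_)
        congr 1
        refine Finset.sum_congr rfl fun p hp => ?_
        rw [← alphaProb_eq_step hM]
      have hevict : x ∉ CA → ∀ q ∈ CA,
          ∑ p' ∈ CA, A (x :: hist) CA p' * g p' q ≤ 2 * c - 1 := by
        intro hxa q hq
        obtain ⟨hApos, hAsupp, hAsum⟩ := hA.1 (x :: hist) CA hCA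
        have hev := hA.2 x hist CA hCA hxa q hq
        have h1 : ∑ p ∈ CA, A (x :: hist) CA p * (1 - alphaProb M p q x)
            = 1 - ∑ p ∈ CA, A (x :: hist) CA p * alphaProb M p q x := by
          have : ∀ p ∈ CA, A (x :: hist) CA p * (1 - alphaProb M p q x)
              = A (x :: hist) CA p - A (x :: hist) CA p * alphaProb M p q x :=
            fun p _ => by ring
          rw [Finset.sum_congr rfl this, Finset.sum_sub_distrib, hAsum]
        have h2 : ∑ p ∈ CA, A (x :: hist) CA p * alphaProb M p q x ≤ 1 - 1 / c := by
          rw [h1] at hev; linarith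
        have h3 : ∑ p' ∈ CA, A (x :: hist) CA p' * g p' q
            = c * (∑ p' ∈ CA, A (x :: hist) CA p') +
              c * ∑ p' ∈ CA, A (x :: hist) CA p' * alphaProb M p' q x := by
          rw [Finset.mul_sum, Finset.mul_sum, ← Finset.sum_add_distrib]
          exact Finset.sum_congr rfl fun p _ => by simp only [hg]; ring
        have h4 : c * ∑ p ∈ CA, A (x :: hist) CA p * alphaProb M p q x
            ≤ c * (1 - 1 / c) := mul_le_mul_of_nonneg_left h2 (le_of_lt hc0)
        have h5 : c * (1 - 1 / c) = c - 1 := by field_simp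
        rw [h3, hAsum]
        linarith
      by_cases hxa : x ∈ CA
      · by_cases hxb : x ∈ CB
        · -- both hit
          simp only [hfA, hfB]
          rw [if_pos hxa, if_pos hxb]
          have h0 := hIH CA CB σ hCA hCB hσ
          have hsum : ∑ p ∈ D, g p (σ p) =
              c * D.card + ∑ p ∈ D, c * stepP M p (σ p) x := by
            have hcongr : ∀ p ∈ D, g p (σ p) = c + c * stepP M p (σ p) x := by
              intro p hp
              have hpD := Finset.mem_sdiff.1 hp
              have hσp := Finset.mem_sdiff.1 ((hmemD p).1 hp)
              rw [stepP_eq_alpha (fun h => hσp.2 (by rw [← h]; exact hxb))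
                (fun h => hpD.2 (by rw [← h]; exact hxa))]
              simp only [hg]; ring
            rw [Finset.sum_congr rfl hcongr, Finset.sum_add_distrib,
              Finset.sum_const, nsmul_eq_mul]
            ring
          linarith
        · -- A hits, B misses
          simp only [hfA, hfB]
          rw [if_pos hxa, if_neg hxb]
          have hxD' : x ∈ CA \ CB := Finset.mem_sdiff.2 ⟨hxa, hxb⟩
          obtain ⟨px, hpxD, hpx⟩ := Finset.mem_image.1
            (show x ∈ D.image ⇑σ by rw [hσ]; exact hxD')
          have hpxB : px ∈ CB := (Finset.mem_sdiff.1 hpxD).1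
          have hpxA : px ∉ CA := (Finset.mem_sdiff.1 hpxD).2
          have hpxx : px ≠ x := fun h => hpxA (h ▸ hxa)
          obtain ⟨hBpos, hBsupp, hBsum⟩ := hB (x :: hist) CB hCB
          have hper : ∀ p'' ∈ CB,
              runAux M A T (M x) (x :: hist) CA ≤
                2 * c * runAux M B T (M x) (x :: hist) (insert x (CB.erase p'')) +
                ((∑ p ∈ D.erase px, g p (σ p)) + 2 * c) := by
            intro p'' hp''
            have hcard'' : (insert x (CB.erase p'')).card = k := by
              rw [card_insert_erase hp'' hxb, hCB]
            have hp''x : p'' ≠ x := fun h => hxb (h ▸ hp'')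
            by_cases hp''a : p'' ∈ CA
            · -- p'' was in both caches
              have hnd : insert x (CB.erase p'') \ CA = D := by
                ext y
                simp only [hD, Finset.mem_sdiff, Finset.mem_insert, Finset.mem_erase]
                by_cases h1 : y = p'' <;> by_cases h2 : y = x <;>
                  simp [h1, h2, hp''a, hp'', hxa, hxb, hp''x] <;> tauto
              have hnd' : CA \ insert x (CB.erase p'')
                  = insert p'' ((CA \ CB).erase x) := by
                ext y
                simp only [Finset.mem_sdiff, Finset.mem_insert, Finset.mem_erase]
                by_cases h1 : y = p'' <;> by_cases h2 : y = x <;>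
                  simp [h1, h2, hp''a, hp'', hxa, hxb, hp''x] <;> tauto
              have hagree : ∀ y ∈ D.erase px, (Equiv.swap x p'' * σ) y = σ y := by
                intro y hy
                have hy1 := Finset.mem_erase.1 hy
                have h1 : σ y ≠ x := fun h => hy1.1 (σ.injective (h.trans hpx.symm))
                have h2 : σ y ≠ p'' := fun h =>
                  (Finset.mem_sdiff.1 ((hmemD y).1 hy1.2)).2 (by rw [h]; exact hp'')
                rw [Equiv.Perm.mul_apply, Equiv.swap_apply_of_ne_of_ne h1 h2]
              have himg : D.image ⇑(Equiv.swap x p'' * σ)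
                  = insert p'' ((CA \ CB).erase x) := by
                rw [← Finset.insert_erase hpxD, Finset.image_insert]
                have hc1 : (Equiv.swap x p'' * σ) px = p'' := by
                  rw [Equiv.Perm.mul_apply, hpx, Equiv.swap_apply_left]
                have hc2 : (D.erase px).image ⇑(Equiv.swap x p'' * σ)
                    = (D.erase px).image ⇑σ :=
                  Finset.image_congr fun y hy => hagree y (Finset.mem_coe.1 hy)
                rw [hc1, hc2, Finset.image_erase σ.injective, hσ, hpx]
              have hkey := hIH CA (insert x (CB.erase p'')) (Equiv.swap x p'' * σ)
                hCA hcard'' (by rw [hnd, hnd']; exact himg)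
              rw [hnd] at hkey
              have hsplit : ∑ p ∈ D, g p ((Equiv.swap x p'' * σ) p)
                  = g px p'' + ∑ p ∈ D.erase px, g p (σ p) := by
                rw [← Finset.add_sum_erase _ _ hpxD]
                congr 1
                · rw [Equiv.Perm.mul_apply, hpx, Equiv.swap_apply_left]
                · exact Finset.sum_congr rfl fun y hy => by rw [hagree y hy]
              rw [hsplit] at hkey
              have hb := hg2 px p''
              linarith
            · -- p'' ∈ CB \ CA
              have hp''D : p'' ∈ D := Finset.mem_sdiff.2 ⟨hp'', hp''a⟩
              have hnd : insert x (CB.erase p'') \ CA = D.erase p'' := by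
                ext y
                simp only [hD, Finset.mem_sdiff, Finset.mem_insert, Finset.mem_erase]
                by_cases h1 : y = p'' <;> by_cases h2 : y = x <;>
                  simp [h1, h2, hp''a, hp'', hxa, hxb, hp''x] <;> tauto
              have hnd' : CA \ insert x (CB.erase p'') = (CA \ CB).erase x := by
                ext y
                simp only [Finset.mem_sdiff, Finset.mem_insert, Finset.mem_erase]
                by_cases h1 : y = p'' <;> by_cases h2 : y = x <;>
                  simp [h1, h2, hp''a, hp'', hxa, hxb, hp''x] <;> tauto
              by_cases hpp : p'' = px
              · subst hpp
                have himg : (D.erase p'').image ⇑σ = (CA \ CB).erase x := by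
                  rw [Finset.image_erase σ.injective, hσ, hpx]
                have hkey := hIH CA (insert x (CB.erase p'')) σ hCA hcard''
                  (by rw [hnd, hnd']; exact himg)
                rw [hnd] at hkey
                linarith
              · have hpxe : px ∈ D.erase p'' :=
                  Finset.mem_erase.2 ⟨fun h => hpp h.symm, hpxD⟩
                have hagree : ∀ y ∈ (D.erase p'').erase px,
                    (σ * Equiv.swap px p'') y = σ y := by
                  intro y hy
                  have hy1 := Finset.mem_erase.1 hy
                  have hy2 := Finset.mem_erase.1 hy1.2
                  rw [Equiv.Perm.mul_apply, Equiv.swap_apply_of_ne_of_ne hy1.1 hy2.1]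
                have himg : (D.erase p'').image ⇑(σ * Equiv.swap px p'')
                    = (CA \ CB).erase x := by
                  rw [← Finset.insert_erase hpxe, Finset.image_insert]
                  have hc1 : (σ * Equiv.swap px p'') px = σ p'' := by
                    rw [Equiv.Perm.mul_apply, Equiv.swap_apply_left]
                  have hc2 : ((D.erase p'').erase px).image ⇑(σ * Equiv.swap px p'')
                      = ((D.erase p'').erase px).image ⇑σ :=
                    Finset.image_congr fun y hy => hagree y (Finset.mem_coe.1 hy)
                  rw [hc1, hc2, Finset.image_erase σ.injective,
                    Finset.image_erase σ.injective, hσ, hpx, Finset.erase_right_comm,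
                    Finset.insert_erase (Finset.mem_erase.2
                      ⟨fun h => hpp (σ.injective (h.trans hpx.symm)),
                        (hmemD p'').1 hp''D⟩)]
                have hkey := hIH CA (insert x (CB.erase p'')) (σ * Equiv.swap px p'')
                  hCA hcard'' (by rw [hnd, hnd']; exact himg)
                rw [hnd] at hkey
                have hsplit : ∑ p ∈ D.erase p'', g p ((σ * Equiv.swap px p'') p)
                    = g px (σ p'') + ∑ p ∈ (D.erase p'').erase px, g p (σ p) := by
                  rw [← Finset.add_sum_erase _ _ hpxe]
                  congr 1
                  · rw [Equiv.Perm.mul_apply, Equiv.swap_apply_left]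
                  · exact Finset.sum_congr rfl fun y hy => by rw [hagree y hy]
                have hS2 : ∑ p ∈ D.erase px, g p (σ p)
                    = g p'' (σ p'') + ∑ p ∈ (D.erase px).erase p'', g p (σ p) :=
                  (Finset.add_sum_erase _ _
                    (Finset.mem_erase.2 ⟨hpp, hp''D⟩)).symm
                have hee : (D.erase p'').erase px = (D.erase px).erase p'' :=
                  Finset.erase_right_comm
                rw [hsplit, hee] at hkey
                have hb1 := hg2 px (σ p'')
                have hb2 := hgc p'' (σ p'')
                linarith
          have hmisc : c * ↑D.card + ∑ p ∈ D, c * stepP M p (σ p) x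
              = (∑ p ∈ D.erase px, g p (σ p)) + c := by
            have h1 : c * ↑D.card + ∑ p ∈ D, c * stepP M p (σ p) x
                = ∑ p ∈ D, (c + c * stepP M p (σ p) x) := by
              rw [Finset.sum_add_distrib, Finset.sum_const, nsmul_eq_mul]; ring
            rw [h1, ← Finset.add_sum_erase _ _ hpxD]
            have h2 : stepP M px (σ px) x = 0 := by
              unfold stepP
              rw [hpx, if_pos rfl]
            have h3 : ∀ p ∈ D.erase px, c + c * stepP M p (σ p) x = g p (σ p) := by
              intro p hp
              have hp1 := Finset.mem_erase.1 hp
              have hpD := Finset.mem_sdiff.1 hp1.2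
              have hx1 : x ≠ σ p := fun h => hp1.1 (σ.injective (hpx.trans h)).symm
              rw [stepP_eq_alpha hx1 (fun h => hxb (by rw [h]; exact hpD.1))]
              simp only [hg]; ring
            rw [Finset.sum_congr rfl h3, h2]
            ring
          have hsum1 : runAux M A T (M x) (x :: hist) CA
              = ∑ p'' ∈ CB, B (x :: hist) CB p'' *
                  runAux M A T (M x) (x :: hist) CA := by
            rw [← Finset.sum_mul, hBsum, one_mul]
          have hsum2 : ∑ p'' ∈ CB, B (x :: hist) CB p'' *
              runAux M A T (M x) (x :: hist) CA
              ≤ ∑ p'' ∈ CB, B (x :: hist) CB p'' *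
                (2 * c * runAux M B T (M x) (x :: hist) (insert x (CB.erase p'')) +
                  ((∑ p ∈ D.erase px, g p (σ p)) + 2 * c)) :=
            Finset.sum_le_sum fun p'' hp'' =>
              mul_le_mul_of_nonneg_left (hper p'' hp'') (hBpos p'')
          have hsum3 : ∑ p'' ∈ CB, B (x :: hist) CB p'' *
              (2 * c * runAux M B T (M x) (x :: hist) (insert x (CB.erase p'')) +
                ((∑ p ∈ D.erase px, g p (σ p)) + 2 * c))
              = 2 * c * (∑ p'' ∈ CB, B (x :: hist) CB p'' *
                  runAux M B T (M x) (x :: hist) (insert x (CB.erase p''))) +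
                ((∑ p ∈ D.erase px, g p (σ p)) + 2 * c) := by
            have he : ∀ p'' ∈ CB, B (x :: hist) CB p'' *
                (2 * c * runAux M B T (M x) (x :: hist) (insert x (CB.erase p'')) +
                  ((∑ p ∈ D.erase px, g p (σ p)) + 2 * c))
                = 2 * c * (B (x :: hist) CB p'' *
                    runAux M B T (M x) (x :: hist) (insert x (CB.erase p''))) +
                  B (x :: hist) CB p'' *
                    ((∑ p ∈ D.erase px, g p (σ p)) + 2 * c) := fun _ _ => by ring
            rw [Finset.sum_congr rfl he, Finset.sum_add_distrib, ← Finset.mul_sum,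
              ← Finset.sum_mul, hBsum, one_mul]
          linarith
      · by_cases hxb : x ∈ CB
        · -- A misses, B hits
          simp only [hfA, hfB]
          rw [if_neg hxa, if_pos hxb]
          have hxD : x ∈ D := Finset.mem_sdiff.2 ⟨hxb, hxa⟩
          have hσx : σ x ∈ CA \ CB := (hmemD x).1 hxD
          have hσxA : σ x ∈ CA := (Finset.mem_sdiff.1 hσx).1
          have hσxB : σ x ∉ CB := (Finset.mem_sdiff.1 hσx).2
          obtain ⟨hApos, hAsupp, hAsum⟩ := hA.1 (x :: hist) CA hCA
          have hper : ∀ p' ∈ CA,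
              runAux M A T (M x) (x :: hist) (insert x (CA.erase p')) ≤
                2 * c * runAux M B T (M x) (x :: hist) CB +
                ((∑ p ∈ D.erase x, g p (σ p)) + g p' (σ x)) := by
            intro p' hp'
            have hcard' : (insert x (CA.erase p')).card = k := by
              rw [card_insert_erase hp' hxa, hCA]
            have hpx : p' ≠ x := fun h => hxa (h ▸ hp')
            by_cases hp'b : p' ∈ CB
            · -- p' was in both caches
              have hnd : CB \ insert x (CA.erase p') = insert p' (D.erase x) := by
                ext y
                simp only [hD, Finset.mem_sdiff, Finset.mem_insert, Finset.mem_erase]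
                by_cases h1 : y = p' <;> by_cases h2 : y = x <;>
                  simp [h1, h2] <;> tauto
              have hnd' : insert x (CA.erase p') \ CB = CA \ CB := by
                ext y
                simp only [Finset.mem_sdiff, Finset.mem_insert, Finset.mem_erase]
                by_cases h1 : y = p' <;> by_cases h2 : y = x <;>
                  simp [h1, h2] <;> tauto
              have himg : (insert p' (D.erase x)).image ⇑(σ * Equiv.swap p' x)
                  = CA \ CB := by
                rw [Finset.image_insert]
                have hc1 : (σ * Equiv.swap p' x) p' = σ x := by
                  rw [Equiv.Perm.mul_apply, Equiv.swap_apply_left]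
                have hc2 : (D.erase x).image ⇑(σ * Equiv.swap p' x)
                    = (D.erase x).image ⇑σ :=
                  Finset.image_congr fun y hy => by
                    have hy' := Finset.mem_erase.1 (Finset.mem_coe.1 hy)
                    have hyD := Finset.mem_sdiff.1 hy'.2
                    rw [Equiv.Perm.mul_apply,
                      Equiv.swap_apply_of_ne_of_ne
                        (fun h => hyD.2 (by rw [h]; exact hp')) hy'.1]
                rw [hc1, hc2, Finset.image_erase σ.injective, hσ,
                  Finset.insert_erase hσx]
              have hkey := hIH (insert x (CA.erase p')) CB (σ * Equiv.swap p' x)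
                hcard' hCB (by rw [hnd, hnd']; exact himg)
              rw [hnd] at hkey
              have hsplit : ∑ p ∈ insert p' (D.erase x), g p ((σ * Equiv.swap p' x) p)
                  = g p' (σ x) + ∑ p ∈ D.erase x, g p (σ p) := by
                rw [Finset.sum_insert
                  (fun h => (Finset.mem_sdiff.1 (Finset.mem_of_mem_erase h)).2 hp')]
                congr 1
                · rw [Equiv.Perm.mul_apply, Equiv.swap_apply_left]
                · exact Finset.sum_congr rfl fun y hy => by
                    have hy' := Finset.mem_erase.1 hy
                    have hyD := Finset.mem_sdiff.1 hy'.2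
                    rw [Equiv.Perm.mul_apply,
                      Equiv.swap_apply_of_ne_of_ne
                        (fun h => hyD.2 (by rw [h]; exact hp')) hy'.1]
              rw [hsplit] at hkey
              linarith
            · -- p' ∈ CA \ CB
              have hnd : CB \ insert x (CA.erase p') = D.erase x := by
                ext y
                simp only [hD, Finset.mem_sdiff, Finset.mem_insert, Finset.mem_erase]
                by_cases h1 : y = p' <;> by_cases h2 : y = x <;>
                  simp [h1, h2] <;> tauto
              have hnd' : insert x (CA.erase p') \ CB = (CA \ CB).erase p' := by
                ext y
                simp only [Finset.mem_sdiff, Finset.mem_insert, Finset.mem_erase]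
                by_cases h1 : y = p' <;> by_cases h2 : y = x <;>
                  simp [h1, h2] <;> tauto
              by_cases hps : p' = σ x
              · have himg : (D.erase x).image ⇑σ = (CA \ CB).erase p' := by
                  rw [Finset.image_erase σ.injective, hσ, hps]
                have hkey := hIH (insert x (CA.erase p')) CB σ hcard' hCB
                  (by rw [hnd, hnd']; exact himg)
                rw [hnd] at hkey
                have hb := hg0 p' (σ x)
                linarith
              · obtain ⟨p₀, hp₀D, hp₀⟩ := Finset.mem_image.1
                  (show p' ∈ D.image ⇑σ by
                    rw [hσ]; exact Finset.mem_sdiff.2 ⟨hp', hp'b⟩)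
                have hp₀x : p₀ ≠ x := fun h => hps (by rw [← hp₀, h])
                have hp₀e : p₀ ∈ D.erase x := Finset.mem_erase.2 ⟨hp₀x, hp₀D⟩
                have hagree : ∀ y ∈ (D.erase x).erase p₀,
                    (σ * Equiv.swap p₀ x) y = σ y := by
                  intro y hy
                  have hy1 := Finset.mem_erase.1 hy
                  have hy2 := Finset.mem_erase.1 hy1.2
                  rw [Equiv.Perm.mul_apply,
                    Equiv.swap_apply_of_ne_of_ne hy1.1 hy2.1]
                have himg : (D.erase x).image ⇑(σ * Equiv.swap p₀ x)
                    = (CA \ CB).erase p' := by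
                  rw [← Finset.insert_erase hp₀e, Finset.image_insert]
                  have hc1 : (σ * Equiv.swap p₀ x) p₀ = σ x := by
                    rw [Equiv.Perm.mul_apply, Equiv.swap_apply_left]
                  have hc2 : ((D.erase x).erase p₀).image ⇑(σ * Equiv.swap p₀ x)
                      = ((D.erase x).erase p₀).image ⇑σ :=
                    Finset.image_congr fun y hy => hagree y (Finset.mem_coe.1 hy)
                  rw [hc1, hc2, Finset.image_erase σ.injective,
                    Finset.image_erase σ.injective, hσ, hp₀, Finset.erase_right_comm,
                    Finset.insert_erase
                      (Finset.mem_erase.2 ⟨fun h => hps h.symm, hσx⟩)]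
                have hkey := hIH (insert x (CA.erase p')) CB (σ * Equiv.swap p₀ x)
                  hcard' hCB (by rw [hnd, hnd']; exact himg)
                rw [hnd] at hkey
                have hsplit : ∑ p ∈ D.erase x, g p ((σ * Equiv.swap p₀ x) p)
                    = g p₀ (σ x) + ∑ p ∈ (D.erase x).erase p₀, g p (σ p) := by
                  rw [← Finset.add_sum_erase _ _ hp₀e]
                  congr 1
                  · rw [Equiv.Perm.mul_apply, Equiv.swap_apply_left]
                  · exact Finset.sum_congr rfl fun y hy => by rw [hagree y hy]
                have hS2 : ∑ p ∈ D.erase x, g p (σ p)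
                    = g p₀ p' + ∑ p ∈ (D.erase x).erase p₀, g p (σ p) := by
                  rw [← Finset.add_sum_erase _ _ hp₀e, hp₀]
                have hb1 := hg2 p₀ (σ x)
                have hb2 := hgc p₀ p'
                have hb3 := hgc p' (σ x)
                rw [hsplit] at hkey
                linarith
          have hevx := hevict hxa (σ x) hσxA
          have hsum1 : ∑ p' ∈ CA, A (x :: hist) CA p' *
              runAux M A T (M x) (x :: hist) (insert x (CA.erase p'))
              ≤ ∑ p' ∈ CA, A (x :: hist) CA p' *
                (2 * c * runAux M B T (M x) (x :: hist) CB +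
                  ((∑ p ∈ D.erase x, g p (σ p)) + g p' (σ x))) :=
            Finset.sum_le_sum fun p' hp' =>
              mul_le_mul_of_nonneg_left (hper p' hp') (hApos p')
          have hsum2 : ∑ p' ∈ CA, A (x :: hist) CA p' *
              (2 * c * runAux M B T (M x) (x :: hist) CB +
                ((∑ p ∈ D.erase x, g p (σ p)) + g p' (σ x)))
              = (2 * c * runAux M B T (M x) (x :: hist) CB +
                  (∑ p ∈ D.erase x, g p (σ p))) +
                ∑ p' ∈ CA, A (x :: hist) CA p' * g p' (σ x) := by
            have he : ∀ p' ∈ CA, A (x :: hist) CA p' *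
                (2 * c * runAux M B T (M x) (x :: hist) CB +
                  ((∑ p ∈ D.erase x, g p (σ p)) + g p' (σ x)))
                = A (x :: hist) CA p' *
                    (2 * c * runAux M B T (M x) (x :: hist) CB +
                      (∑ p ∈ D.erase x, g p (σ p))) +
                  A (x :: hist) CA p' * g p' (σ x) := fun p' _ => by ring
            rw [Finset.sum_congr rfl he, Finset.sum_add_distrib,
              ← Finset.sum_mul, hAsum, one_mul]
          have hmisc : c * ↑D.card + ∑ p ∈ D, c * stepP M p (σ p) x
              = (∑ p ∈ D.erase x, g p (σ p)) + 2 * c := by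
            have h1 : c * ↑D.card + ∑ p ∈ D, c * stepP M p (σ p) x
                = ∑ p ∈ D, (c + c * stepP M p (σ p) x) := by
              rw [Finset.sum_add_distrib, Finset.sum_const, nsmul_eq_mul]; ring
            rw [h1, ← Finset.add_sum_erase _ _ hxD]
            have h2 : stepP M x (σ x) x = 1 := by
              unfold stepP
              rw [if_neg (fun h => hxa (by rw [h]; exact hσxA)), if_pos rfl]
            have h3 : ∀ p ∈ D.erase x, c + c * stepP M p (σ p) x = g p (σ p) := by
              intro p hp
              have hp1 := Finset.mem_erase.1 hp
              have hpD := Finset.mem_sdiff.1 hp1.2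
              have hσp := Finset.mem_sdiff.1 ((hmemD p).1 hp1.2)
              rw [stepP_eq_alpha (fun h => hσp.2 (by rw [← h]; exact hxb))
                (fun h => hp1.1 h.symm)]
              simp only [hg]; ring
            rw [Finset.sum_congr rfl h3, h2]
            ring
          linarith
        · -- both miss
          simp only [hfA, hfB]
          rw [if_neg hxa, if_neg hxb]
          obtain ⟨hApos, hAsupp, hAsum⟩ := hA.1 (x :: hist) CA hCA
          obtain ⟨hBpos, hBsupp, hBsum⟩ := hB (x :: hist) CB hCB
          have hper : ∀ p'' ∈ CB,
              ∑ p' ∈ CA, A (x :: hist) CA p' *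
                runAux M A T (M x) (x :: hist) (insert x (CA.erase p')) ≤
              2 * c * runAux M B T (M x) (x :: hist) (insert x (CB.erase p'')) +
              ((∑ p ∈ D, g p (σ p)) + (2 * c - 1)) := by
            intro p'' hp''
            have hcard'' : (insert x (CB.erase p'')).card = k := by
              rw [card_insert_erase hp'' hxb, hCB]
            have hp''x : p'' ≠ x := fun h => hxb (h ▸ hp'')
            by_cases hp''a : p'' ∈ CA
            · -- comparison page q = p'' ∈ CA
              have hperA : ∀ p' ∈ CA,
                  runAux M A T (M x) (x :: hist) (insert x (CA.erase p')) ≤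
                  2 * c * runAux M B T (M x) (x :: hist) (insert x (CB.erase p'')) +
                  ((∑ p ∈ D, g p (σ p)) + g p' p'') := by
                intro p' hp'
                have hcard' : (insert x (CA.erase p')).card = k := by
                  rw [card_insert_erase hp' hxa, hCA]
                have hp'x : p' ≠ x := fun h => hxa (h ▸ hp')
                by_cases hpp : p' = p''
                · subst hpp
                  have hnd : insert x (CB.erase p') \ insert x (CA.erase p') = D := by
                    ext y
                    simp only [hD, Finset.mem_sdiff, Finset.mem_insert, Finset.mem_erase]
                    by_cases h1 : y = p' <;> by_cases h2 : y = x <;>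
                      simp [h1, h2, hp', hp'', hxa, hxb, hp'x] <;> tauto
                  have hnd' : insert x (CA.erase p') \ insert x (CB.erase p')
                      = CA \ CB := by
                    ext y
                    simp only [Finset.mem_sdiff, Finset.mem_insert, Finset.mem_erase]
                    by_cases h1 : y = p' <;> by_cases h2 : y = x <;>
                      simp [h1, h2, hp', hp'', hxa, hxb, hp'x] <;> tauto
                  have hkey := hIH (insert x (CA.erase p')) (insert x (CB.erase p')) σ
                    hcard' hcard'' (by rw [hnd, hnd']; exact hσ)
                  rw [hnd] at hkey
                  have hb := hg0 p' p'
                  linarith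
                · by_cases hp'b : p' ∈ CB
                  · -- p' in both caches, p'' in both caches, p' ≠ p''
                    have hnd : insert x (CB.erase p'') \ insert x (CA.erase p')
                        = insert p' D := by
                      ext y
                      simp only [hD, Finset.mem_sdiff, Finset.mem_insert, Finset.mem_erase]
                      by_cases h1 : y = p' <;> by_cases h2 : y = p'' <;>
                        by_cases h3 : y = x <;>
                        simp [h1, h2, h3, hp', hp'b, hp''a, hp'', hxa, hxb, hp'x,
                          hp''x, hpp] <;> tauto
                    have hnd' : insert x (CA.erase p') \ insert x (CB.erase p'')
                        = insert p'' (CA \ CB) := by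
                      ext y
                      simp only [Finset.mem_sdiff, Finset.mem_insert, Finset.mem_erase]
                      by_cases h1 : y = p' <;> by_cases h2 : y = p'' <;>
                        by_cases h3 : y = x <;>
                        simp [h1, h2, h3, hp', hp'b, hp''a, hp'', hxa, hxb, hp'x,
                          hp''x, hpp] <;> tauto
                    have hσp'' : ∀ y ∈ D, (Equiv.swap (σ p') p'' * σ) y = σ y := by
                      intro y hy
                      have h1 : σ y ≠ σ p' := fun h =>
                        (Finset.mem_sdiff.1 hy).2 (by rw [σ.injective h]; exact hp')
                      have h2 : σ y ≠ p'' := fun h =>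
                        (Finset.mem_sdiff.1 ((hmemD y).1 hy)).2 (by rw [h]; exact hp'')
                      rw [Equiv.Perm.mul_apply, Equiv.swap_apply_of_ne_of_ne h1 h2]
                    have hp'D : p' ∉ D := fun h => (Finset.mem_sdiff.1 h).2 hp'
                    have himg : (insert p' D).image ⇑(Equiv.swap (σ p') p'' * σ)
                        = insert p'' (CA \ CB) := by
                      rw [Finset.image_insert]
                      have hc1 : (Equiv.swap (σ p') p'' * σ) p' = p'' := by
                        rw [Equiv.Perm.mul_apply, Equiv.swap_apply_left]
                      have hc2 : D.image ⇑(Equiv.swap (σ p') p'' * σ) = D.image ⇑σ :=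
                        Finset.image_congr fun y hy => hσp'' y (Finset.mem_coe.1 hy)
                      rw [hc1, hc2, hσ]
                    have hkey := hIH (insert x (CA.erase p')) (insert x (CB.erase p''))
                      (Equiv.swap (σ p') p'' * σ) hcard' hcard''
                      (by rw [hnd, hnd']; exact himg)
                    rw [hnd] at hkey
                    have hsplit : ∑ p ∈ insert p' D, g p ((Equiv.swap (σ p') p'' * σ) p)
                        = g p' p'' + ∑ p ∈ D, g p (σ p) := by
                      rw [Finset.sum_insert hp'D]
                      congr 1
                      · rw [Equiv.Perm.mul_apply, Equiv.swap_apply_left]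
                      · exact Finset.sum_congr rfl fun y hy => by rw [hσp'' y hy]
                    rw [hsplit] at hkey
                    linarith
                  · -- p' ∈ CA \ CB, p'' in both caches
                    obtain ⟨p₀, hp₀D, hp₀⟩ := Finset.mem_image.1
                      (show p' ∈ D.image ⇑σ by
                        rw [hσ]; exact Finset.mem_sdiff.2 ⟨hp', hp'b⟩)
                    have hnd : insert x (CB.erase p'') \ insert x (CA.erase p')
                        = D := by
                      ext y
                      simp only [hD, Finset.mem_sdiff, Finset.mem_insert, Finset.mem_erase]
                      by_cases h1 : y = p' <;> by_cases h2 : y = p'' <;>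
                        by_cases h3 : y = x <;>
                        simp [h1, h2, h3, hp', hp'b, hp''a, hp'', hxa, hxb, hp'x,
                          hp''x, hpp] <;> tauto
                    have hnd' : insert x (CA.erase p') \ insert x (CB.erase p'')
                        = insert p'' ((CA \ CB).erase p') := by
                      ext y
                      simp only [Finset.mem_sdiff, Finset.mem_insert, Finset.mem_erase]
                      by_cases h1 : y = p' <;> by_cases h2 : y = p'' <;>
                        by_cases h3 : y = x <;>
                        simp [h1, h2, h3, hp', hp'b, hp''a, hp'', hxa, hxb, hp'x,
                          hp''x, hpp] <;> tauto
                    have hagree : ∀ y ∈ D.erase p₀, (Equiv.swap p' p'' * σ) y = σ y := by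
                      intro y hy
                      have hy1 := Finset.mem_erase.1 hy
                      have h1 : σ y ≠ p' := fun h => hy1.1 (σ.injective (h.trans hp₀.symm))
                      have h2 : σ y ≠ p'' := fun h =>
                        (Finset.mem_sdiff.1 ((hmemD y).1 hy1.2)).2 (by rw [h]; exact hp'')
                      rw [Equiv.Perm.mul_apply, Equiv.swap_apply_of_ne_of_ne h1 h2]
                    have himg : D.image ⇑(Equiv.swap p' p'' * σ)
                        = insert p'' ((CA \ CB).erase p') := by
                      rw [← Finset.insert_erase hp₀D, Finset.image_insert]
                      have hc1 : (Equiv.swap p' p'' * σ) p₀ = p'' := by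
                        rw [Equiv.Perm.mul_apply, hp₀, Equiv.swap_apply_left]
                      have hc2 : (D.erase p₀).image ⇑(Equiv.swap p' p'' * σ)
                          = (D.erase p₀).image ⇑σ :=
                        Finset.image_congr fun y hy => hagree y (Finset.mem_coe.1 hy)
                      rw [hc1, hc2, Finset.image_erase σ.injective, hσ, hp₀]
                    have hkey := hIH (insert x (CA.erase p')) (insert x (CB.erase p''))
                      (Equiv.swap p' p'' * σ) hcard' hcard''
                      (by rw [hnd, hnd']; exact himg)
                    rw [hnd] at hkey
                    have hsplit : ∑ p ∈ D, g p ((Equiv.swap p' p'' * σ) p)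
                        = g p₀ p'' + ∑ p ∈ D.erase p₀, g p (σ p) := by
                      rw [← Finset.add_sum_erase _ _ hp₀D]
                      congr 1
                      · rw [Equiv.Perm.mul_apply, hp₀, Equiv.swap_apply_left]
                      · exact Finset.sum_congr rfl fun y hy => by rw [hagree y hy]
                    have hS2 : ∑ p ∈ D, g p (σ p)
                        = g p₀ p' + ∑ p ∈ D.erase p₀, g p (σ p) := by
                      rw [← Finset.add_sum_erase _ _ hp₀D, hp₀]
                    rw [hsplit] at hkey
                    have hb1 := hg2 p₀ p''
                    have hb2 := hgc p₀ p'
                    have hb3 := hgc p' p''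
                    linarith
              have h1 : ∑ p' ∈ CA, A (x :: hist) CA p' *
                  runAux M A T (M x) (x :: hist) (insert x (CA.erase p'))
                  ≤ ∑ p' ∈ CA, A (x :: hist) CA p' *
                    (2 * c * runAux M B T (M x) (x :: hist) (insert x (CB.erase p'')) +
                      ((∑ p ∈ D, g p (σ p)) + g p' p'')) :=
                Finset.sum_le_sum fun p' hp' =>
                  mul_le_mul_of_nonneg_left (hperA p' hp') (hApos p')
              have h2 : ∑ p' ∈ CA, A (x :: hist) CA p' *
                  (2 * c * runAux M B T (M x) (x :: hist) (insert x (CB.erase p'')) +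
                    ((∑ p ∈ D, g p (σ p)) + g p' p''))
                  = (2 * c * runAux M B T (M x) (x :: hist) (insert x (CB.erase p'')) +
                      (∑ p ∈ D, g p (σ p))) +
                    ∑ p' ∈ CA, A (x :: hist) CA p' * g p' p'' := by
                have he : ∀ p' ∈ CA, A (x :: hist) CA p' *
                    (2 * c * runAux M B T (M x) (x :: hist) (insert x (CB.erase p'')) +
                      ((∑ p ∈ D, g p (σ p)) + g p' p''))
                    = A (x :: hist) CA p' *
                        (2 * c * runAux M B T (M x) (x :: hist) (insert x (CB.erase p'')) +
                          (∑ p ∈ D, g p (σ p))) +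
                      A (x :: hist) CA p' * g p' p'' := fun _ _ => by ring
                rw [Finset.sum_congr rfl he, Finset.sum_add_distrib, ← Finset.sum_mul,
                  hAsum, one_mul]
              have h3 := hevict hxa p'' hp''a
              linarith
            · -- p'' ∈ CB \ CA : comparison page q = σ p''
              have hp''D : p'' ∈ D := Finset.mem_sdiff.2 ⟨hp'', hp''a⟩
              have hσp''q : σ p'' ∈ CA \ CB := (hmemD p'').1 hp''D
              have hperA : ∀ p' ∈ CA,
                  runAux M A T (M x) (x :: hist) (insert x (CA.erase p')) ≤
                  2 * c * runAux M B T (M x) (x :: hist) (insert x (CB.erase p'')) +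
                  ((∑ p ∈ D, g p (σ p)) + (g p' (σ p'') - c)) := by
                intro p' hp'
                have hcard' : (insert x (CA.erase p')).card = k := by
                  rw [card_insert_erase hp' hxa, hCA]
                have hp'x : p' ≠ x := fun h => hxa (h ▸ hp')
                have hpp : p' ≠ p'' := fun h => hp''a (h ▸ hp')
                by_cases hp'b : p' ∈ CB
                · -- p' in both caches, p'' only in B's cache
                  have hnd : insert x (CB.erase p'') \ insert x (CA.erase p')
                      = insert p' (D.erase p'') := by
                    ext y
                    simp only [hD, Finset.mem_sdiff, Finset.mem_insert, Finset.mem_erase]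
                    by_cases h1 : y = p' <;> by_cases h2 : y = p'' <;>
                      by_cases h3 : y = x <;>
                      simp [h1, h2, h3, hp', hp'b, hp''a, hp'', hxa, hxb, hp'x,
                        hp''x, hpp] <;> tauto
                  have hnd' : insert x (CA.erase p') \ insert x (CB.erase p'')
                      = CA \ CB := by
                    ext y
                    simp only [Finset.mem_sdiff, Finset.mem_insert, Finset.mem_erase]
                    by_cases h1 : y = p' <;> by_cases h2 : y = p'' <;>
                      by_cases h3 : y = x <;>
                      simp [h1, h2, h3, hp', hp'b, hp''a, hp'', hxa, hxb, hp'x,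
                        hp''x, hpp] <;> tauto
                  have hagree : ∀ y ∈ D.erase p'', (σ * Equiv.swap p' p'') y = σ y := by
                    intro y hy
                    have hy1 := Finset.mem_erase.1 hy
                    have h1 : y ≠ p' := fun h =>
                      (Finset.mem_sdiff.1 hy1.2).2 (by rw [h]; exact hp')
                    rw [Equiv.Perm.mul_apply, Equiv.swap_apply_of_ne_of_ne h1 hy1.1]
                  have hp'e : p' ∉ D.erase p'' := fun h =>
                    (Finset.mem_sdiff.1 (Finset.mem_of_mem_erase h)).2 hp'
                  have himg : (insert p' (D.erase p'')).image ⇑(σ * Equiv.swap p' p'')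
                      = CA \ CB := by
                    rw [Finset.image_insert]
                    have hc1 : (σ * Equiv.swap p' p'') p' = σ p'' := by
                      rw [Equiv.Perm.mul_apply, Equiv.swap_apply_left]
                    have hc2 : (D.erase p'').image ⇑(σ * Equiv.swap p' p'')
                        = (D.erase p'').image ⇑σ :=
                      Finset.image_congr fun y hy => hagree y (Finset.mem_coe.1 hy)
                    rw [hc1, hc2, Finset.image_erase σ.injective, hσ,
                      Finset.insert_erase hσp''q]
                  have hkey := hIH (insert x (CA.erase p')) (insert x (CB.erase p''))
                    (σ * Equiv.swap p' p'') hcard' hcard''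
                    (by rw [hnd, hnd']; exact himg)
                  rw [hnd] at hkey
                  have hsplit : ∑ p ∈ insert p' (D.erase p''),
                      g p ((σ * Equiv.swap p' p'') p)
                      = g p' (σ p'') + ∑ p ∈ D.erase p'', g p (σ p) := by
                    rw [Finset.sum_insert hp'e]
                    congr 1
                    · rw [Equiv.Perm.mul_apply, Equiv.swap_apply_left]
                    · exact Finset.sum_congr rfl fun y hy => by rw [hagree y hy]
                  have hS2 : ∑ p ∈ D, g p (σ p)
                      = g p'' (σ p'') + ∑ p ∈ D.erase p'', g p (σ p) :=
                    (Finset.add_sum_erase _ _ hp''D).symm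
                  rw [hsplit] at hkey
                  have hb := hgc p'' (σ p'')
                  linarith
                · -- p' ∈ CA \ CB, p'' ∈ CB \ CA
                  obtain ⟨p₀, hp₀D, hp₀⟩ := Finset.mem_image.1
                    (show p' ∈ D.image ⇑σ by
                      rw [hσ]; exact Finset.mem_sdiff.2 ⟨hp', hp'b⟩)
                  have hnd : insert x (CB.erase p'') \ insert x (CA.erase p')
                      = D.erase p'' := by
                    ext y
                    simp only [hD, Finset.mem_sdiff, Finset.mem_insert, Finset.mem_erase]
                    by_cases h1 : y = p' <;> by_cases h2 : y = p'' <;>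
                      by_cases h3 : y = x <;>
                      simp [h1, h2, h3, hp', hp'b, hp''a, hp'', hxa, hxb, hp'x,
                        hp''x, hpp] <;> tauto
                  have hnd' : insert x (CA.erase p') \ insert x (CB.erase p'')
                      = (CA \ CB).erase p' := by
                    ext y
                    simp only [Finset.mem_sdiff, Finset.mem_insert, Finset.mem_erase]
                    by_cases h1 : y = p' <;> by_cases h2 : y = p'' <;>
                      by_cases h3 : y = x <;>
                      simp [h1, h2, h3, hp', hp'b, hp''a, hp'', hxa, hxb, hp'x,
                        hp''x, hpp] <;> tauto
                  by_cases hpp0 : p₀ = p''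
                  · have hσp''p : σ p'' = p' := by rw [← hpp0, hp₀]
                    have himg : (D.erase p'').image ⇑σ = (CA \ CB).erase p' := by
                      rw [Finset.image_erase σ.injective, hσ, hσp''p]
                    have hkey := hIH (insert x (CA.erase p')) (insert x (CB.erase p'')) σ
                      hcard' hcard'' (by rw [hnd, hnd']; exact himg)
                    rw [hnd] at hkey
                    have hS2 : ∑ p ∈ D, g p (σ p)
                        = g p'' (σ p'') + ∑ p ∈ D.erase p'', g p (σ p) :=
                      (Finset.add_sum_erase _ _ hp''D).symm
                    have hb1 := hgc p'' (σ p'')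
                    have hb2 := hg0 p' (σ p'')
                    linarith
                  · have hp₀e : p₀ ∈ D.erase p'' := Finset.mem_erase.2 ⟨hpp0, hp₀D⟩
                    have hagree : ∀ y ∈ (D.erase p'').erase p₀,
                        (σ * Equiv.swap p₀ p'') y = σ y := by
                      intro y hy
                      have hy1 := Finset.mem_erase.1 hy
                      have hy2 := Finset.mem_erase.1 hy1.2
                      rw [Equiv.Perm.mul_apply, Equiv.swap_apply_of_ne_of_ne hy1.1 hy2.1]
                    have hσp''x : σ p'' ≠ p' := fun h =>
                      hpp0 (σ.injective (hp₀.trans h.symm))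
                    have himg : (D.erase p'').image ⇑(σ * Equiv.swap p₀ p'')
                        = (CA \ CB).erase p' := by
                      rw [← Finset.insert_erase hp₀e, Finset.image_insert]
                      have hc1 : (σ * Equiv.swap p₀ p'') p₀ = σ p'' := by
                        rw [Equiv.Perm.mul_apply, Equiv.swap_apply_left]
                      have hc2 : ((D.erase p'').erase p₀).image ⇑(σ * Equiv.swap p₀ p'')
                          = ((D.erase p'').erase p₀).image ⇑σ :=
                        Finset.image_congr fun y hy => hagree y (Finset.mem_coe.1 hy)
                      rw [hc1, hc2, Finset.image_erase σ.injective,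
                        Finset.image_erase σ.injective, hσ, hp₀, Finset.erase_right_comm,
                        Finset.insert_erase (Finset.mem_erase.2 ⟨hσp''x, hσp''q⟩)]
                    have hkey := hIH (insert x (CA.erase p')) (insert x (CB.erase p''))
                      (σ * Equiv.swap p₀ p'') hcard' hcard''
                      (by rw [hnd, hnd']; exact himg)
                    rw [hnd] at hkey
                    have hsplit : ∑ p ∈ D.erase p'', g p ((σ * Equiv.swap p₀ p'') p)
                        = g p₀ (σ p'') + ∑ p ∈ (D.erase p'').erase p₀, g p (σ p) := by
                      rw [← Finset.add_sum_erase _ _ hp₀e]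
                      congr 1
                      · rw [Equiv.Perm.mul_apply, Equiv.swap_apply_left]
                      · exact Finset.sum_congr rfl fun y hy => by rw [hagree y hy]
                    have hS2 : ∑ p ∈ D, g p (σ p)
                        = g p'' (σ p'') + (g p₀ p' +
                          ∑ p ∈ (D.erase p'').erase p₀, g p (σ p)) := by
                      rw [← Finset.add_sum_erase _ _ hp''D, ← Finset.add_sum_erase _ _ hp₀e, hp₀]
                    rw [hsplit] at hkey
                    have hb1 := hg2 p₀ (σ p'')
                    have hb2 := hgc p₀ p'
                    have hb3 := hgc p'' (σ p'')
                    have hb4 := hgc p' (σ p'')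
                    linarith
              have h1 : ∑ p' ∈ CA, A (x :: hist) CA p' *
                  runAux M A T (M x) (x :: hist) (insert x (CA.erase p'))
                  ≤ ∑ p' ∈ CA, A (x :: hist) CA p' *
                    (2 * c * runAux M B T (M x) (x :: hist) (insert x (CB.erase p'')) +
                      ((∑ p ∈ D, g p (σ p)) + (g p' (σ p'') - c))) :=
                Finset.sum_le_sum fun p' hp' =>
                  mul_le_mul_of_nonneg_left (hperA p' hp') (hApos p')
              have h2 : ∑ p' ∈ CA, A (x :: hist) CA p' *
                  (2 * c * runAux M B T (M x) (x :: hist) (insert x (CB.erase p'')) +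
                    ((∑ p ∈ D, g p (σ p)) + (g p' (σ p'') - c)))
                  = (2 * c * runAux M B T (M x) (x :: hist) (insert x (CB.erase p'')) +
                      ((∑ p ∈ D, g p (σ p)) - c)) +
                    ∑ p' ∈ CA, A (x :: hist) CA p' * g p' (σ p'') := by
                have he : ∀ p' ∈ CA, A (x :: hist) CA p' *
                    (2 * c * runAux M B T (M x) (x :: hist) (insert x (CB.erase p'')) +
                      ((∑ p ∈ D, g p (σ p)) + (g p' (σ p'') - c)))
                    = A (x :: hist) CA p' *
                        (2 * c * runAux M B T (M x) (x :: hist) (insert x (CB.erase p'')) +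
                          ((∑ p ∈ D, g p (σ p)) - c)) +
                      A (x :: hist) CA p' * g p' (σ p'') := fun _ _ => by ring
                rw [Finset.sum_congr rfl he, Finset.sum_add_distrib, ← Finset.sum_mul,
                  hAsum, one_mul]
              have h3 := hevict hxa (σ p'') (Finset.mem_sdiff.1 hσp''q).1
              linarith
          have hmisc : c * ↑D.card + ∑ p ∈ D, c * stepP M p (σ p) x
              = ∑ p ∈ D, g p (σ p) := by
            rw [show c * ↑D.card + ∑ p ∈ D, c * stepP M p (σ p) x
                = ∑ p ∈ D, (c + c * stepP M p (σ p) x) from by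
              rw [Finset.sum_add_distrib, Finset.sum_const, nsmul_eq_mul]; ring]
            refine Finset.sum_congr rfl fun p hp => ?_
            have hpD := Finset.mem_sdiff.1 hp
            have hσp := Finset.mem_sdiff.1 ((hmemD p).1 hp)
            rw [stepP_eq_alpha (fun h => hxa (by rw [h]; exact hσp.1))
              (fun h => hxb (by rw [h]; exact hpD.1))]
            simp only [hg]; ring
          have e0 : ∑ p' ∈ CA, A (x :: hist) CA p' *
              runAux M A T (M x) (x :: hist) (insert x (CA.erase p'))
              = ∑ p'' ∈ CB, B (x :: hist) CB p'' *
                (∑ p' ∈ CA, A (x :: hist) CA p' *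
                  runAux M A T (M x) (x :: hist) (insert x (CA.erase p'))) := by
            rw [← Finset.sum_mul, hBsum, one_mul]
          have e1 : ∑ p'' ∈ CB, B (x :: hist) CB p'' *
              (∑ p' ∈ CA, A (x :: hist) CA p' *
                runAux M A T (M x) (x :: hist) (insert x (CA.erase p')))
              ≤ ∑ p'' ∈ CB, B (x :: hist) CB p'' *
                (2 * c * runAux M B T (M x) (x :: hist) (insert x (CB.erase p'')) +
                  ((∑ p ∈ D, g p (σ p)) + (2 * c - 1))) :=
            Finset.sum_le_sum fun p'' hp'' =>
              mul_le_mul_of_nonneg_left (hper p'' hp'') (hBpos p'')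
          have e2 : ∑ p'' ∈ CB, B (x :: hist) CB p'' *
              (2 * c * runAux M B T (M x) (x :: hist) (insert x (CB.erase p'')) +
                ((∑ p ∈ D, g p (σ p)) + (2 * c - 1)))
              = 2 * c * (∑ p'' ∈ CB, B (x :: hist) CB p'' *
                  runAux M B T (M x) (x :: hist) (insert x (CB.erase p''))) +
                ((∑ p ∈ D, g p (σ p)) + (2 * c - 1)) := by
            have he : ∀ p'' ∈ CB, B (x :: hist) CB p'' *
                (2 * c * runAux M B T (M x) (x :: hist) (insert x (CB.erase p'')) +
                  ((∑ p ∈ D, g p (σ p)) + (2 * c - 1)))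
                = 2 * c * (B (x :: hist) CB p'' *
                    runAux M B T (M x) (x :: hist) (insert x (CB.erase p''))) +
                  B (x :: hist) CB p'' *
                    ((∑ p ∈ D, g p (σ p)) + (2 * c - 1)) := fun _ _ => by ring
            rw [Finset.sum_congr rfl he, Finset.sum_add_distrib, ← Finset.mul_sum,
              ← Finset.sum_mul, hBsum, one_mul]
          linarith
    have expand : ∑ x : Fin n, dist x *
        (2 * c * fB x + c * D.card + ∑ p ∈ D, c * stepP M p (σ p) x)
        = 2 * c * (∑ x : Fin n, dist x * fB x) +
          ∑ p ∈ D, c * (1 + ∑ x : Fin n, dist x * stepP M p (σ p) x) := by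
      have e1 : ∀ x : Fin n, dist x *
          (2 * c * fB x + c * D.card + ∑ p ∈ D, c * stepP M p (σ p) x)
          = 2 * c * (dist x * fB x) + dist x * (c * D.card) +
            ∑ p ∈ D, c * (dist x * stepP M p (σ p) x) := by
        intro x
        have hms : dist x * ∑ p ∈ D, c * stepP M p (σ p) x
            = ∑ p ∈ D, c * (dist x * stepP M p (σ p) x) := by
          rw [Finset.mul_sum]
          exact Finset.sum_congr rfl fun p _ => by ring
        rw [mul_add, mul_add, hms]
        ring
      calc ∑ x : Fin n, dist x *
            (2 * c * fB x + c * D.card + ∑ p ∈ D, c * stepP M p (σ p) x)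
          = ∑ x : Fin n, (2 * c * (dist x * fB x) + dist x * (c * D.card) +
              ∑ p ∈ D, c * (dist x * stepP M p (σ p) x)) :=
            Finset.sum_congr rfl fun x _ => e1 x
        _ = 2 * c * (∑ x : Fin n, dist x * fB x) +
            (∑ x : Fin n, dist x) * (c * D.card) +
            ∑ p ∈ D, c * (∑ x : Fin n, dist x * stepP M p (σ p) x) := by
            rw [Finset.sum_add_distrib, Finset.sum_add_distrib, ← Finset.mul_sum,
              ← Finset.sum_mul, Finset.sum_comm]
            congr 1
            refine Finset.sum_congr rfl fun p _ => by rw [Finset.mul_sum]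
        _ = 2 * c * (∑ x : Fin n, dist x * fB x) +
            ∑ p ∈ D, c * (1 + ∑ x : Fin n, dist x * stepP M p (σ p) x) := by
            rw [hdist.2, one_mul]
            rw [show ∀ S : Finset (Fin n), ∀ h : Fin n → ℝ,
              (∑ p ∈ S, c * (1 + h p)) = c * S.card + ∑ p ∈ S, c * h p from
              fun S h => by
                simp only [mul_add, mul_one, Finset.sum_add_distrib,
                  Finset.sum_const, nsmul_eq_mul]
                ring_nf]
            ring
    calc runAux M A (T + 1) dist hist CA = ∑ x : Fin n, dist x * fA x := hrA
      _ ≤ ∑ x : Fin n, dist x *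
            (2 * c * fB x + c * D.card + ∑ p ∈ D, c * stepP M p (σ p) x) :=
        Finset.sum_le_sum fun x _ => mul_le_mul_of_nonneg_left (hFbound x) (hdist.1 x)
      _ = 2 * c * (∑ x : Fin n, dist x * fB x) +
          ∑ p ∈ D, c * (1 + ∑ x : Fin n, dist x * stepP M p (σ p) x) := expand
      _ = 2 * c * runAux M B (T + 1) dist hist CB +
          ∑ p ∈ D, c * (1 + ∑ x : Fin n, dist x * stepP M p (σ p) x) := by rw [hrB]

end KeyLemma
/-- **Theorem (Lund–Phillips–Reingold charging-scheme analysis).**  Every online paging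
policy `A` satisfying the eviction hypothesis with parameter `c ≥ 1` is
`2c`-competitive: for every online paging policy `B` started from the same initial cache
and every horizon `T`, `E[cost(A, T)] ≤ 2c · E[cost(B, T)]`. -/
theorem eviction_hypothesis_two_c_competitive {n k : ℕ} (hkn : k < n)
    (M : Fin n → Fin n → ℝ) (hM : IsStochastic M)
    (init : Fin n → ℝ) (hinit : IsDist init)
    (C₀ : Finset (Fin n)) (hC₀ : C₀.card = k)
    (c : ℝ) (hc : 1 ≤ c)
    (A : Policy n) (hA : EvictionHyp k M A c)
    (B : Policy n) (hB : IsPolicy k B) (T : ℕ) :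
    expCost M init A C₀ T ≤ 2 * c * expCost M init B C₀ T := by
  have h := key_lemma k hM c hc A B hA hB T init [] C₀ C₀ 1 hinit hC₀ hC₀
    (by rw [Finset.sdiff_self, Finset.image_empty])
  simpa [expCost, Finset.sdiff_self] using h
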